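/- arXiv:1805.11173 — 4 statements merged into one kernel-verified Lean document; each statement's English description precedes it below -/
import Mathlib

section
/- Let A, B be C*-algebras, A₀ ⊆ A a dense *-subalgebra, and π₀ : A₀ → B a *-homomorphism. The following are equivalent: (i) π₀ extends to a (necessarily unique) *-homomorphism π : A → B; (ii) there exists a jointly faithful family {σ_i : B → D_i}_{i∈I} of positive linear maps into C*-algebras D_i such that every composition σ_i ∘ π₀ : A₀ → D_i is bounded with respect to the norm of A (equivalently, extends to a continuous positive linear map on A). -/
/-!
Write `d = π₀ (a⋆a) ≥ 0` and `s = ‖a⋆a‖`. The bounds on `σᵢ ∘ π₀` give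
`‖σᵢ (dⁿ⁺¹)‖ ≤ Cᵢ sⁿ⁺¹`. For `s' > s`, the spectral cut-off `g = (d - s')₊` satisfies
`g ≤ (‖d‖ / s'ⁿ⁺¹) dⁿ⁺¹`, so `‖σᵢ g‖ ≤ ‖d‖ Cᵢ (s / s')ⁿ⁺¹ → 0`. Joint faithfulness then
forces `g = 0`, i.e. `‖d‖ ≤ s'`. Hence `‖π₀ a‖² = ‖d‖ ≤ ‖a‖²`: `π₀` is contractive and
extends by continuity, the extension being a *-homomorphism by density.
-/

open scoped ComplexOrder

universe u

/-- `L_ψ = {a | ψ (star a * a) = 0}`. -/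
def Lset {E F : Type*} [Mul E] [Star E] [Zero F] (ψ : E → F) : Set E :=
  {a | ψ (star a * a) = 0}

/-- A positive linear map from `B` into some C*-algebra (the target is part of the data). -/
structure PosLinMapFrom (B : Type u) [NonUnitalCStarAlgebra B] [PartialOrder B]
    [StarOrderedRing B] : Type (u + 1) where
  carrier : Type u
  [algInst : NonUnitalCStarAlgebra carrier]
  [ordInst : PartialOrder carrier]
  [starOrdInst : StarOrderedRing carrier]
  toFun : B →ₗ[ℂ] carrier
  pos : ∀ b : B, 0 ≤ b → 0 ≤ toFun b

attribute [instance] PosLinMapFrom.algInst PosLinMapFrom.ordInst PosLinMapFrom.starOrdInst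

open Filter Topology

/-- `powSucc c n = c ^ (n + 1)`, which makes sense without a unit. -/
def powSucc {R : Type*} [Mul R] (c : R) : ℕ → R
  | 0 => c
  | n + 1 => c * powSucc c n

lemma map_powSucc {R S F : Type*} [Mul R] [Mul S] [FunLike F R S] [MulHomClass F R S]
    (φ : F) (c : R) (n : ℕ) : φ (powSucc c n) = powSucc (φ c) n := by
  induction n with
  | zero => rfl
  | succ n ih => simp only [powSucc, map_mul, ih]

lemma norm_powSucc_le {R : Type*} [NonUnitalSeminormedRing R] (c : R) (n : ℕ) :
    ‖powSucc c n‖ ≤ ‖c‖ ^ (n + 1) := by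
  induction n with
  | zero => simp [powSucc]
  | succ n ih =>
    calc ‖c * powSucc c n‖ ≤ ‖c‖ * ‖powSucc c n‖ := norm_mul_le _ _
      _ ≤ ‖c‖ * ‖c‖ ^ (n + 1) := by gcongr
      _ = ‖c‖ ^ (n + 2) := by ring

lemma cfcₙ_pow_succ {R A : Type*} {p : A → Prop} [CommSemiring R] [Nontrivial R] [StarRing R]
    [MetricSpace R] [IsTopologicalSemiring R] [ContinuousStar R] [NonUnitalRing A] [StarRing A]
    [TopologicalSpace A] [Module R A] [IsScalarTower R A A] [SMulCommClass R A A]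
    [NonUnitalContinuousFunctionalCalculus R A p] (a : A) (n : ℕ) (ha : p a := by cfc_tac) :
    cfcₙ (fun t : R => t ^ (n + 1)) a = powSucc a n := by
  induction n with
  | zero => simpa [powSucc] using cfcₙ_id' R a
  | succ n ih =>
    simp only [pow_succ' _ (n + 1)]
    rw [cfcₙ_mul (fun t : R => t) _ a, cfcₙ_id' R a, ih]
    rfl

lemma max_sub_zero_le_div_mul_pow {s t r : ℝ} (hs : 0 < s) (ht : 0 ≤ t) (htr : t ≤ r) (n : ℕ) :
    max (t - s) 0 ≤ r / s ^ (n + 1) * t ^ (n + 1) := by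
  have hK : 0 ≤ r / s ^ (n + 1) := div_nonneg (ht.trans htr) (pow_pos hs _).le
  rcases le_or_gt t s with hts | hst
  · rw [max_eq_right (by linarith)]
    positivity
  · rw [max_eq_left (by linarith)]
    calc t - s ≤ r := by linarith
      _ = r / s ^ (n + 1) * s ^ (n + 1) := by field_simp
      _ ≤ r / s ^ (n + 1) * t ^ (n + 1) := by gcongr

section CStarAlgebra

variable {B : Type*} [NonUnitalCStarAlgebra B] [PartialOrder B] [StarOrderedRing B]

lemma cfcₙ_max_sub_le_smul_powSucc {d : B} (hd : 0 ≤ d) {s : ℝ} (hs : 0 < s) (n : ℕ) :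
    cfcₙ (fun t : ℝ => max (t - s) 0) d ≤ (‖d‖ / s ^ (n + 1)) • powSucc d n := by
  rw [← cfcₙ_pow_succ (R := ℝ) d n, ← cfcₙ_const_mul _ _ d]
  refine cfcₙ_mono (fun t ht => max_sub_zero_le_div_mul_pow hs ?_ ?_ n)
    (hf0 := max_eq_right (by linarith))
  · exact quasispectrum_nonneg_of_nonneg d hd t ht
  · exact (Real.le_norm_self t).trans
      (NonUnitalIsometricContinuousFunctionalCalculus.norm_quasispectrum_le d ht)

namespace PosLinMapFrom

variable (σ : PosLinMapFrom B)

lemma map_mono {a b : B} (h : a ≤ b) : σ.toFun a ≤ σ.toFun b := by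
  simpa using σ.pos (b - a) (sub_nonneg.mpr h)

lemma map_eq_zero_of_le_smul_powSucc {g d : B} (hg : 0 ≤ g) {r s s' C : ℝ} (hr : 0 ≤ r)
    (hs : 0 ≤ s) (hss' : s < s') (hle : ∀ n : ℕ, g ≤ (r / s' ^ (n + 1)) • powSucc d n)
    (hC : ∀ n : ℕ, ‖σ.toFun (powSucc d n)‖ ≤ C * s ^ (n + 1)) : σ.toFun g = 0 := by
  have hs' : 0 < s' := hs.trans_lt hss'
  have hbound (n : ℕ) : ‖σ.toFun g‖ ≤ r * C * (s / s') ^ (n + 1) := by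
    have hK : 0 ≤ r / s' ^ (n + 1) := div_nonneg hr (pow_pos hs' _).le
    calc ‖σ.toFun g‖ ≤ ‖σ.toFun ((r / s' ^ (n + 1)) • powSucc d n)‖ :=
          CStarAlgebra.norm_le_norm_of_nonneg_of_le (σ.pos g hg) (σ.map_mono (hle n))
      _ = r / s' ^ (n + 1) * ‖σ.toFun (powSucc d n)‖ := by
          rw [LinearMap.map_smul_of_tower, norm_smul, Real.norm_of_nonneg hK]
      _ ≤ r / s' ^ (n + 1) * (C * s ^ (n + 1)) := by gcongr; exact hC n
      _ = r * C * (s / s') ^ (n + 1) := by rw [div_pow]; ring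
  have hlim : Tendsto (fun n : ℕ => r * C * (s / s') ^ (n + 1)) atTop (𝓝 0) := by
    have hq := tendsto_pow_atTop_nhds_zero_of_lt_one (div_nonneg hs hs'.le)
      ((div_lt_one hs').mpr hss')
    simpa using (hq.comp (tendsto_add_atTop_nat 1)).const_mul (r * C)
  exact norm_le_zero_iff.mp (ge_of_tendsto' hlim hbound)

end PosLinMapFrom

variable {I : Type*} {σ : I → PosLinMapFrom B}

lemma eq_zero_of_nonneg_of_forall_map_eq_zero
    (hfaith : (⋂ i, Lset fun b : B => (σ i).toFun b) = {0}) {g : B} (hg : 0 ≤ g)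
    (h : ∀ i, (σ i).toFun g = 0) : g = 0 := by
  obtain ⟨b, rfl⟩ := CStarAlgebra.nonneg_iff_eq_star_mul_self.mp hg
  have hb : b ∈ ⋂ i, Lset fun b : B => (σ i).toFun b := Set.mem_iInter.mpr h
  rw [hfaith, Set.mem_singleton_iff] at hb
  rw [hb, star_zero, zero_mul]

theorem norm_le_of_forall_norm_map_powSucc_le
    (hfaith : (⋂ i, Lset fun b : B => (σ i).toFun b) = {0}) {d : B} (hd : 0 ≤ d) {s : ℝ}
    (hs : 0 ≤ s) (hbdd : ∀ i, ∃ C : ℝ, ∀ n : ℕ, ‖(σ i).toFun (powSucc d n)‖ ≤ C * s ^ (n + 1)) :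
    ‖d‖ ≤ s := by
  refine le_of_forall_gt_imp_ge_of_dense fun s' hss' => ?_
  have hs' : 0 < s' := hs.trans_lt hss'
  have hcut_nonneg : 0 ≤ cfcₙ (fun t : ℝ => max (t - s') 0) d :=
    cfcₙ_nonneg fun _ _ => le_max_right _ _
  have hcut : cfcₙ (fun t : ℝ => max (t - s') 0) d = 0 := by
    refine eq_zero_of_nonneg_of_forall_map_eq_zero hfaith hcut_nonneg fun i => ?_
    obtain ⟨C, hC⟩ := hbdd i
    exact (σ i).map_eq_zero_of_le_smul_powSucc hcut_nonneg (norm_nonneg d) hs hss'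
      (cfcₙ_max_sub_le_smul_powSucc hd hs') hC
  have hspec := eqOn_of_cfcₙ_eq_cfcₙ (hcut.trans (cfcₙ_zero ℝ d).symm)
    (hf0 := max_eq_right (by linarith))
  obtain ⟨t, ht, htd : ‖t‖ = ‖d‖⟩ :=
    (NonUnitalIsometricContinuousFunctionalCalculus.isGreatest_norm_quasispectrum (𝕜 := ℝ) d).1
  rw [← htd, Real.norm_of_nonneg (quasispectrum_nonneg_of_nonneg d hd t ht)]
  have hcut_t : max (t - s') 0 = 0 := hspec ht
  linarith [le_max_left (t - s') 0]

end CStarAlgebra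

theorem norm_apply_le_of_jointly_faithful {A B : Type*} [NonUnitalNormedRing A] [StarRing A]
    [CStarRing A] [Module ℂ A] [NonUnitalCStarAlgebra B] [PartialOrder B] [StarOrderedRing B]
    {A₀ : NonUnitalStarSubalgebra ℂ A} (π₀ : A₀ →⋆ₙₐ[ℂ] B) {I : Type*} {σ : I → PosLinMapFrom B}
    (hfaith : (⋂ i, Lset fun b : B => (σ i).toFun b) = {0})
    (hbdd : ∀ i, ∃ C : ℝ, ∀ a : A₀, ‖(σ i).toFun (π₀ a)‖ ≤ C * ‖(a : A)‖) (a : A₀) :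
    ‖π₀ a‖ ≤ ‖(a : A)‖ := by
  set c := star a * a
  have hd : 0 ≤ π₀ c := by
    simpa only [c, map_mul, map_star] using star_mul_self_nonneg (π₀ a)
  have key : ‖π₀ c‖ ≤ ‖(c : A)‖ := by
    refine norm_le_of_forall_norm_map_powSucc_le hfaith hd (norm_nonneg _) fun i => ?_
    obtain ⟨C, hC⟩ := hbdd i
    refine ⟨max C 0, fun n => ?_⟩
    have hcoe : ((powSucc c n : A₀) : A) = powSucc (c : A) n :=
      map_powSucc (NonUnitalStarSubalgebraClass.subtype A₀) c n
    calc ‖(σ i).toFun (powSucc (π₀ c) n)‖ = ‖(σ i).toFun (π₀ (powSucc c n))‖ := by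
          rw [map_powSucc π₀]
      _ ≤ C * ‖((powSucc c n : A₀) : A)‖ := hC _
      _ ≤ max C 0 * ‖((powSucc c n : A₀) : A)‖ := by gcongr; exact le_max_left C 0
      _ ≤ max C 0 * ‖(c : A)‖ ^ (n + 1) := by
          rw [hcoe]
          exact mul_le_mul_of_nonneg_left (norm_powSucc_le _ _) (le_max_right C 0)
  have hc : (c : A) = star (a : A) * a := rfl
  rw [hc, map_mul, map_star, CStarRing.norm_star_mul_self, CStarRing.norm_star_mul_self] at key
  exact (mul_self_le_mul_self_iff (norm_nonneg _) (norm_nonneg _)).mpr key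

theorem NonUnitalStarAlgHom.exists_extension_of_dense {𝕜 A B : Type*} [NormedField 𝕜]
    [StarRing 𝕜] [NonUnitalNormedRing A] [NormedSpace 𝕜 A] [StarRing A] [ContinuousStar A]
    [NonUnitalNormedRing B] [NormedSpace 𝕜 B] [StarRing B] [ContinuousStar B] [CompleteSpace B]
    {A₀ : NonUnitalStarSubalgebra 𝕜 A} (hdense : Dense (A₀ : Set A)) (π₀ : A₀ →⋆ₙₐ[𝕜] B)
    {C : ℝ} (hC : ∀ a : A₀, ‖π₀ a‖ ≤ C * ‖(a : A)‖) :
    ∃ π : A →⋆ₙₐ[𝕜] B, ∀ a : A₀, π a = π₀ a := by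
  let e : A₀ →ₗ[𝕜] A := NonUnitalStarSubalgebraClass.subtype A₀
  have he : DenseRange e := hdense.denseRange_val
  let π := (π₀ : A₀ →ₗ[𝕜] B).extendOfNorm e
  have hπ (a : A₀) : π a = π₀ a := LinearMap.extendOfNorm_eq he ⟨C, hC⟩ a
  refine ⟨{ π with
    map_zero' := map_zero π
    map_mul' := fun x y => he.induction_on₂ (p := fun x y => π (x * y) = π x * π y)
      (isClosed_eq (by fun_prop) (by fun_prop)) (fun a b => ?_) x y
    map_star' := fun x => he.induction_on (p := fun x => π (star x) = star (π x)) x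
      (isClosed_eq (by fun_prop) (by fun_prop)) (fun a => ?_) }, hπ⟩
  · show π ((a * b : A₀) : A) = π a * π b
    rw [hπ, hπ, hπ, map_mul]
  · show π ((star a : A₀) : A) = star (π a)
    rw [hπ, hπ, map_star]

lemma Lset_id {E : Type*} [NonUnitalNormedRing E] [StarRing E] [CStarRing E] :
    Lset (fun x : E => x) = {0} :=
  Set.ext fun x => CStarRing.star_mul_self_eq_zero_iff x

def PosLinMapFrom.id (B : Type u) [NonUnitalCStarAlgebra B] [PartialOrder B]
    [StarOrderedRing B] : PosLinMapFrom B where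
  carrier := B
  toFun := LinearMap.id
  pos _ hb := hb

theorem stmt2_general {A B : Type u}
    [NonUnitalCStarAlgebra A]
    [NonUnitalCStarAlgebra B] [PartialOrder B] [StarOrderedRing B]
    (A₀ : NonUnitalStarSubalgebra ℂ A) (hdense : Dense (A₀ : Set A))
    (π₀ : ↥A₀ →⋆ₙₐ[ℂ] B) :
    (∃ π : A →⋆ₙₐ[ℂ] B, ∀ a : ↥A₀, π (a : A) = π₀ a) ↔
      ∃ (I : Type u) (σ : I → PosLinMapFrom B),
        (⋂ i, Lset fun b : B => (σ i).toFun b) = ({0} : Set B) ∧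
        ∀ i, ∃ C : ℝ, ∀ a : ↥A₀, ‖(σ i).toFun (π₀ a)‖ ≤ C * ‖(a : A)‖ := by
  constructor
  · rintro ⟨π, hπ⟩
    refine ⟨PUnit, fun _ => PosLinMapFrom.id B, ?_, fun _ => ⟨1, fun a => ?_⟩⟩
    · rw [Set.iInter_const]
      exact Lset_id
    · rw [one_mul, ← hπ a]
      exact NonUnitalStarAlgHom.norm_apply_le π (a : A)
  · rintro ⟨I, σ, hfaith, hbdd⟩
    exact π₀.exists_extension_of_dense hdense (C := 1) fun a => by
      simpa using norm_apply_le_of_jointly_faithful π₀ hfaith hbdd a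

/-- For a dense *-subalgebra `A₀ ⊆ A` and a *-homomorphism `π₀ : A₀ → B`:
`π₀` extends to a *-homomorphism `π : A → B` iff there exists a jointly faithful family of
positive linear maps `σ i : B → D i` such that each `σ i ∘ π₀` is bounded w.r.t. the norm
of `A`. -/
theorem stmt2 {A B : Type u}
    [NonUnitalCStarAlgebra A] [PartialOrder A] [StarOrderedRing A]
    [NonUnitalCStarAlgebra B] [PartialOrder B] [StarOrderedRing B]
    (A₀ : NonUnitalStarSubalgebra ℂ A) (hdense : Dense (A₀ : Set A))
    (π₀ : ↥A₀ →⋆ₙₐ[ℂ] B) :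
    (∃ π : A →⋆ₙₐ[ℂ] B, ∀ a : ↥A₀, π (a : A) = π₀ a) ↔
      ∃ (I : Type u) (σ : I → PosLinMapFrom B),
        (⋂ i, Lset fun b : B => (σ i).toFun b) = ({0} : Set B) ∧
        ∀ i, ∃ C : ℝ, ∀ a : ↥A₀, ‖(σ i).toFun (π₀ a)‖ ≤ C * ‖(a : A)‖ :=
  stmt2_general A₀ hdense π₀
end

section
/- Let A, B be C*-algebras, A₀ ⊆ A a dense *-subalgebra, and π₀ : A₀ → B a *-homomorphism. Suppose there is a family of positive linear maps {σ_i : B → D_i}_{i∈I} and {ψ_i : A → D_i}_{i∈I} into C*-algebras D_i such that: (a) {σ_i}_{i∈I} is jointly faithful on B; (b) {ψ_i}_{i∈I} is jointly essentially faithful on A; (c) σ_i ∘ π₀ = ψ_i|_{A₀} for every i ∈ I. Then π₀ extends uniquely to an injective *-homomorphism π : A → B; in particular, the family {ψ_i}_{i∈I} is jointly faithful. -/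
open scoped ComplexOrder

/-- `K_ψ = {a | ψ (x * a * y) = 0 for all x, y}`. -/
def Kset {E F : Type*} [Mul E] [Zero F] (ψ : E → F) : Set E :=
  {a | ∀ x y : E, ψ (x * a * y) = 0}

/-!
Consider the closure `G` of the graph of `π₀` in `A × B`; it is a C⋆-subalgebra. By continuity of
positive maps, `σ i b = ψ i a` for every `(a, b) ∈ G`. If `(0, b) ∈ G` then also `(0, b⋆b) ∈ G`,
so `σ i (b⋆b) = 0` for all `i` and `b = 0` by joint faithfulness of the `σ i`. Hence the first
projection `G → A` is an injective ⋆-homomorphism of C⋆-algebras, thus isometric, and its range is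
closed and dense, so it is a ⋆-isomorphism; composing its inverse with the second projection
gives the extension `π`. Any extension is continuous and satisfies `σ i ∘ π = ψ i`, so its kernel
is an ideal on which every `ψ i` vanishes; joint essential faithfulness makes it injective, and
then `ψ i (a⋆a) = σ i (π a⋆ π a)` shows that the `ψ i` are jointly faithful.
-/

open scoped CStarAlgebra

section Faithfulness

variable {ι A B F : Type*} {D : ι → Type*} [∀ i, Zero (D i)] [FunLike F A B]

theorem injective_of_iInter_Kset_eq_zero [NonUnitalNonAssocRing A] [NonUnitalNonAssocRing B]
    [NonUnitalRingHomClass F A B] (π : F) (σ : ∀ i, B → D i) (ψ : ∀ i, A → D i)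
    (hK : ⋂ i, Kset (ψ i) = {0}) (h : ∀ i a, σ i (π a) = ψ i a) : Function.Injective π := by
  have hK0 : (0 : A) ∈ ⋂ i, Kset (ψ i) := hK ▸ rfl
  refine (injective_iff_map_eq_zero π).2 fun a ha => ?_
  suffices a ∈ ⋂ i, Kset (ψ i) by rwa [hK] at this
  refine Set.mem_iInter.2 fun i x y => ?_
  rw [← h, map_mul, map_mul, ha, mul_zero, zero_mul, ← map_zero π, h]
  simpa using Set.mem_iInter.1 hK0 i 0 0

theorem iInter_Lset_eq_zero_of_injective [NonUnitalNonAssocSemiring A] [Star A]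
    [NonUnitalNonAssocSemiring B] [Star B] [NonUnitalRingHomClass F A B] [StarHomClass F A B]
    (π : F) (hπ : Function.Injective π) (σ : ∀ i, B → D i) (ψ : ∀ i, A → D i)
    (hL : ⋂ i, Lset (σ i) = {0}) (h : ∀ i a, σ i (π a) = ψ i a) :
    ⋂ i, Lset (ψ i) = {0} := by
  have hLψ : ∀ a, a ∈ ⋂ i, Lset (ψ i) ↔ π a ∈ ⋂ i, Lset (σ i) := fun a => by
    simp only [Set.mem_iInter, Lset, Set.mem_ofPred_eq, ← h, map_mul, map_star]
  ext a
  rw [hLψ, hL, Set.mem_singleton_iff, Set.mem_singleton_iff, ← map_zero π, hπ.eq_iff]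

end Faithfulness

theorem LinearMap.continuous_of_map_nonneg {A D : Type*}
    [NonUnitalCStarAlgebra A] [PartialOrder A] [StarOrderedRing A]
    [NonUnitalCStarAlgebra D] [PartialOrder D] [StarOrderedRing D]
    (f : A →ₗ[ℂ] D) (hf : ∀ a, 0 ≤ a → 0 ≤ f a) : Continuous f :=
  map_continuous (PositiveLinearMap.mk₀ f hf)

theorem NonUnitalStarAlgHom.surjective_of_injective_of_denseRange {F A B : Type*}
    [NonUnitalCStarAlgebra A] [NonUnitalCStarAlgebra B] [FunLike F A B]
    [NonUnitalAlgHomClass F ℂ A B] [StarHomClass F A B] (φ : F) (hinj : Function.Injective φ)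
    (hdense : DenseRange φ) : Function.Surjective φ := by
  rw [← Set.range_eq_univ, ← hdense.closure_range,
    (isometry φ hinj).isClosedEmbedding.isClosed_range.closure_eq]

namespace NonUnitalStarAlgHom

variable {A B : Type*} [NonUnitalCStarAlgebra A] [NonUnitalCStarAlgebra B]
  {A₀ : NonUnitalStarSubalgebra ℂ A} (π₀ : A₀ →⋆ₙₐ[ℂ] B)

def graphClosure : NonUnitalStarSubalgebra ℂ (A × B) :=
  (NonUnitalStarAlgHom.range
    ((NonUnitalStarSubalgebraClass.subtype A₀).prod π₀)).topologicalClosure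

instance : IsClosed (graphClosure π₀ : Set (A × B)) :=
  NonUnitalStarSubalgebra.isClosed_topologicalClosure _

theorem mk_mem_graphClosure (a : A₀) : ((a : A), π₀ a) ∈ graphClosure π₀ :=
  NonUnitalStarSubalgebra.le_topologicalClosure _ ⟨a, rfl⟩

theorem eq_of_mem_graphClosure {X : Type*} [TopologicalSpace X] [T2Space X] {f : B → X}
    {g : A → X} (hf : Continuous f) (hg : Continuous g) (h : ∀ a : A₀, f (π₀ a) = g a)
    {p : A × B} (hp : p ∈ graphClosure π₀) : f p.2 = g p.1 := by
  refine Set.EqOn.closure ?_ (hf.comp continuous_snd) (hg.comp continuous_fst) hp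
  rintro _ ⟨a, rfl⟩
  exact h a

def graphFst : graphClosure π₀ →⋆ₙₐ[ℂ] A :=
  (fst ℂ A B).comp (NonUnitalStarSubalgebraClass.subtype _)

theorem denseRange_graphFst (hdense : Dense (A₀ : Set A)) : DenseRange (graphFst π₀) :=
  hdense.mono fun a ha => ⟨⟨_, mk_mem_graphClosure π₀ ⟨a, ha⟩⟩, rfl⟩

theorem injective_graphFst {ι : Type*} {D : ι → Type*} [∀ i, TopologicalSpace (D i)]
    [∀ i, T2Space (D i)] [∀ i, AddCommMonoid (D i)] [∀ i, Module ℂ (D i)]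
    (σ : ∀ i, B →ₗ[ℂ] D i) (ψ : ∀ i, A →ₗ[ℂ] D i) (hσ : ∀ i, Continuous (σ i))
    (hψ : ∀ i, Continuous (ψ i)) (hL : ⋂ i, Lset (σ i) = {0})
    (h : ∀ i (a : A₀), σ i (π₀ a) = ψ i a) : Function.Injective (graphFst π₀) := by
  refine (injective_iff_map_eq_zero _).2 fun z hz => ?_
  have hz₁ : (z : A × B).1 = 0 := hz
  have hz₂ : (z : A × B).2 ∈ ⋂ i, Lset (σ i) := Set.mem_iInter.2 fun i => by
    rw [Lset, Set.mem_ofPred_eq]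
    simpa [hz₁] using eq_of_mem_graphClosure π₀ (hσ i) (hψ i) (h i) (star z * z).2
  rw [hL] at hz₂
  exact Subtype.ext (Prod.ext hz₁ hz₂)

theorem exists_extension_of_injective_graphFst (hdense : Dense (A₀ : Set A))
    (hinj : Function.Injective (graphFst π₀)) : ∃ π : A →⋆ₙₐ[ℂ] B, ∀ a : A₀, π a = π₀ a := by
  let e := StarAlgEquiv.ofBijective (graphFst π₀)
    ⟨hinj, surjective_of_injective_of_denseRange _ hinj (denseRange_graphFst π₀ hdense)⟩
  refine ⟨((snd ℂ A B).comp (NonUnitalStarSubalgebraClass.subtype _)).comp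
    e.symm.toNonUnitalStarAlgHom, fun a => ?_⟩
  have : e.symm a = ⟨_, mk_mem_graphClosure π₀ a⟩ := e.symm_apply_eq.2 rfl
  simp [this]

end NonUnitalStarAlgHom

/-- Given a dense *-subalgebra `A₀ ⊆ A`, a *-homomorphism `π₀ : A₀ → B`, and
families of positive linear maps `σ i : B → D i`, `ψ i : A → D i` with (a) `{σ i}` jointly
faithful, (b) `{ψ i}` jointly essentially faithful, (c) `σ i ∘ π₀ = ψ i` on `A₀`, the map `π₀`
extends uniquely to a *-homomorphism `π : A → B`, every such extension is injective, and
`{ψ i}` is jointly faithful. -/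
theorem stmt3 {A B : Type*}
    [NonUnitalCStarAlgebra A] [PartialOrder A] [StarOrderedRing A]
    [NonUnitalCStarAlgebra B] [PartialOrder B] [StarOrderedRing B]
    (A₀ : NonUnitalStarSubalgebra ℂ A) (hdense : Dense (A₀ : Set A))
    (π₀ : ↥A₀ →⋆ₙₐ[ℂ] B)
    {I : Type*} (D : I → Type*)
    [∀ i, NonUnitalCStarAlgebra (D i)] [∀ i, PartialOrder (D i)] [∀ i, StarOrderedRing (D i)]
    (σ : ∀ i, B →ₗ[ℂ] D i) (ψ : ∀ i, A →ₗ[ℂ] D i)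
    (hσpos : ∀ i, ∀ b : B, 0 ≤ b → 0 ≤ σ i b)
    (hψpos : ∀ i, ∀ a : A, 0 ≤ a → 0 ≤ ψ i a)
    (ha : (⋂ i, Lset fun b : B => σ i b) = ({0} : Set B))
    (hb : (⋂ i, Kset fun a : A => ψ i a) = ({0} : Set A))
    (hc : ∀ i, ∀ a : ↥A₀, σ i (π₀ a) = ψ i (a : A)) :
    (∃! π : A →⋆ₙₐ[ℂ] B, ∀ a : ↥A₀, π (a : A) = π₀ a) ∧
    (∀ π : A →⋆ₙₐ[ℂ] B, (∀ a : ↥A₀, π (a : A) = π₀ a) → Function.Injective π) ∧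
    (⋂ i, Lset fun a : A => ψ i a) = ({0} : Set A) := by
  have hσ i := (σ i).continuous_of_map_nonneg (hσpos i)
  have hψ i := (ψ i).continuous_of_map_nonneg (hψpos i)
  have hcomp (π : A →⋆ₙₐ[ℂ] B) (hπ : ∀ a : A₀, π a = π₀ a) (i : I) (a : A) :
      σ i (π a) = ψ i a :=
    congrFun (((hσ i).comp (map_continuous π)).ext_on hdense (hψ i)
      fun a ha => (congrArg (σ i) (hπ ⟨a, ha⟩)).trans (hc i ⟨a, ha⟩)) a
  have hinj (π : A →⋆ₙₐ[ℂ] B) (hπ : ∀ a : A₀, π a = π₀ a) : Function.Injective π :=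
    injective_of_iInter_Kset_eq_zero π (fun i => σ i) (fun i => ψ i) hb (hcomp π hπ)
  obtain ⟨π, hπ⟩ := π₀.exists_extension_of_injective_graphFst hdense
    (π₀.injective_graphFst σ ψ hσ hψ ha hc)
  refine ⟨⟨π, hπ, fun π' hπ' => DFunLike.coe_injective ?_⟩, hinj,
    iInter_Lset_eq_zero_of_injective π (hinj π hπ) _ _ ha (hcomp π hπ)⟩
  exact (map_continuous π').ext_on hdense (map_continuous π)
    fun a ha => (hπ' ⟨a, ha⟩).trans (hπ ⟨a, ha⟩).symm
end

section
/- Let C₀(Q) ⊆ A be a central non-degenerate inclusion and suppose the set Q^unif_simple = {q ∈ Q : A/J^unif_q is simple} is non-empty. Then for every non-empty subset Q₀ ⊆ Q^unif_simple, the closed two-sided ideal ⋂_{q∈Q₀} J^unif_q is dominant relative to C₀(Q): every proper closed two-sided ideal L of A with C₀(Q) ∩ L ⊆ C₀(Q) ∩ (⋂_{q∈Q₀} J^unif_q) satisfies L ⊆ ⋂_{q∈Q₀} J^unif_q. -/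
open scoped ComplexOrder
open ZeroAtInfty

/-- The smallest closed two-sided ideal of `A` containing `S` (as a set): the intersection of
all closed two-sided ideals containing `S`. -/
def closedIdealGenBy {A : Type*} [NonUnitalCStarAlgebra A] (S : Set A) : Set A :=
  ⋂₀ {L : Set A | (∃ I : TwoSidedIdeal A, (I : Set A) = L) ∧ IsClosed L ∧ S ⊆ L}

/-- `J^unif_q`: the closed two-sided ideal of `A` generated by
`C_{0,q}(Q) = {f ∈ C₀(Q) : f q = 0}` (viewed in `A` via the inclusion `ι`). -/
def Junif {Q : Type*} [TopologicalSpace Q] [LocallyCompactSpace Q] [T2Space Q]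
    {A : Type*} [NonUnitalCStarAlgebra A] (ι : C₀(Q, ℂ) →⋆ₙₐ[ℂ] A) (q : Q) : Set A :=
  closedIdealGenBy {a : A | ∃ f : C₀(Q, ℂ), f q = 0 ∧ a = ι f}

/-- `A / J` is a simple C*-algebra, encoded via the correspondence between closed two-sided
ideals of `A / J` and closed two-sided ideals of `A` containing `J`: `J` is proper and the only
closed two-sided ideals of `A` containing `J` are `J` itself and `A`. -/
def QuotientSimpleBy {A : Type*} [NonUnitalCStarAlgebra A] (J : Set A) : Prop :=
  J ≠ Set.univ ∧ ∀ L : TwoSidedIdeal A, IsClosed (L : Set A) → J ⊆ (L : Set A) →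
    (L : Set A) = J ∨ (L : Set A) = Set.univ

/-!
Fix `q ∈ Q₀` and a closed ideal `L` as in the statement. The elements `a` with
`inf {dist (g a, L) : g ∈ C₀(Q), g q = 1, ‖g‖ ≤ 1} = 0` form a closed ideal containing `L` and
`J^unif_q`. By simplicity of `A ⧸ J^unif_q` this ideal is `J^unif_q`, which then contains `L`,
or it is all of `A`. In the latter case some `h ∈ C₀(Q)` with `|h q| = 1`, `‖h‖ ≤ 1` lies within
`1/8` of some `l ∈ L`. Then `l*l` is close to `|h|²`, and with `g = (|h|² - 1/2)₊` one gets
`g² ≤ √g (l*l) √g ∈ L`. As closed ideals of C*-algebras are hereditary, `g² ∈ L`; but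
`g q ≠ 0`, whereas every function in `L ∩ C₀(Q) ⊆ J^unif_q` vanishes at `q`.
-/

open scoped CStarAlgebra

namespace ZeroAtInftyContinuousMap

variable {α β : Type*} [TopologicalSpace α]

lemma norm_le [NormedAddCommGroup β] (f : C₀(α, β)) {C : ℝ} (hC : 0 ≤ C) :
    ‖f‖ ≤ C ↔ ∀ x, ‖f x‖ ≤ C := by
  rw [← norm_toBCF_eq_norm]
  exact BoundedContinuousFunction.norm_le hC

lemma norm_apply_le [NormedAddCommGroup β] (f : C₀(α, β)) (x : α) : ‖f x‖ ≤ ‖f‖ :=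
  (f.norm_le (norm_nonneg f)).1 le_rfl x

def compNorm [NormedAddCommGroup β] (φ : ℝ → ℝ) (hφ : Continuous φ) (hφ0 : φ 0 = 0)
    (f : C₀(α, β)) : C₀(α, ℂ) where
  toFun x := φ ‖f x‖
  continuous_toFun := by fun_prop
  zero_at_infty' := by
    have : Filter.Tendsto (fun y : β => (φ ‖y‖ : ℂ)) (nhds 0) (nhds 0) := by
      simpa [hφ0] using (show Continuous (fun y : β => (φ ‖y‖ : ℂ)) by fun_prop).tendsto 0
    exact this.comp f.zero_at_infty'

@[simp]
lemma compNorm_apply [NormedAddCommGroup β] (φ : ℝ → ℝ) (hφ : Continuous φ) (hφ0 : φ 0 = 0)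
    (f : C₀(α, β)) (x : α) : compNorm φ hφ hφ0 f x = φ ‖f x‖ := rfl

lemma exists_apply_eq_one_of_mem_isOpen [LocallyCompactSpace α] [T2Space α] {U : Set α}
    (hU : IsOpen U) {q : α} (hq : q ∈ U) :
    ∃ g : C₀(α, ℂ), g q = 1 ∧ ‖g‖ ≤ 1 ∧ ∀ x ∉ U, g x = 0 := by
  obtain ⟨f, hf1, hf0, hfc, hf01⟩ := exists_continuous_one_zero_of_isCompact
    isCompact_singleton hU.isClosed_compl (Set.disjoint_singleton_left.2 (not_not.2 hq))
  refine ⟨⟨⟨fun x => (f x : ℂ), by fun_prop⟩,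
    (hfc.comp_left Complex.ofReal_zero).is_zero_at_infty⟩, ?_, ?_, fun x hx => ?_⟩
  · simpa using hf1 rfl
  · refine (norm_le _ zero_le_one).2 fun x => ?_
    simpa [abs_of_nonneg (hf01 x).1] using (hf01 x).2
  · simpa using hf0 hx

end ZeroAtInftyContinuousMap

lemma CStarAlgebra.exists_norm_mul_star_sub_le {B : Type*} [CStarAlgebra B] [PartialOrder B]
    [StarOrderedRing B] {a b : B} (hab : star a * a ≤ b) {ε : ℝ} (hε : 0 < ε) :
    ∃ c : B, ‖a * star a - a * b * c * star a‖ ≤ ε := by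
  have hb : 0 ≤ b := (star_mul_self_nonneg a).trans hab
  have hpos : ∀ t ∈ spectrum ℝ b, 0 < t + ε := fun t ht => by
    linarith [spectrum_nonneg_of_nonneg hb ht]
  set r : ℝ → ℝ := fun t => (t + ε)⁻¹
  set s : ℝ → ℝ := fun t => √(ε * r t)
  have hr : ContinuousOn r (spectrum ℝ b) :=
    (continuousOn_id.add continuousOn_const).inv₀ fun t ht => (hpos t ht).ne'
  have hs : ContinuousOn s (spectrum ℝ b) := (continuousOn_const.mul hr).sqrt
  have hss : ∀ t ∈ spectrum ℝ b, s t * s t = ε * r t := fun t ht =>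
    Real.mul_self_sqrt (by have := hpos t ht; positivity)
  refine ⟨cfc r b, ?_⟩
  set d := cfc s b
  have hd : IsSelfAdjoint d := cfc_predicate _ b
  -- `d = (ε (b + ε)⁻¹) ^ (1/2)`, so `‖a (1 - b (b + ε)⁻¹) a*‖ = ‖d a* a d‖ ≤ ‖d b d‖ ≤ ε`
  have hdd : d * d = 1 - b * cfc r b := by
    calc d * d = cfc (fun t => s t * s t) b := (cfc_mul s s b hs hs).symm
      _ = cfc (fun t => 1 - t * r t) b := cfc_congr fun t ht => by
          rw [hss t ht]; simp only [r]; field_simp [(hpos t ht).ne']; ring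
      _ = _ := by
          rw [cfc_sub (fun _ => 1) (fun t => t * r t) b continuousOn_const
            (continuousOn_id.mul hr), cfc_const_one ℝ b,
            cfc_mul (fun t => t) r b continuousOn_id hr, cfc_id' ℝ b]
  have hdbd : d * b * d = cfc (fun t => ε * (t * r t)) b := by
    calc d * b * d = cfc s b * cfc (fun t => t) b * cfc s b := by rw [cfc_id' ℝ b]
      _ = cfc (fun t => s t * t * s t) b := by
          rw [← cfc_mul s (fun t => t) b hs continuousOn_id,
            ← cfc_mul (fun t => s t * t) s b (hs.mul continuousOn_id) hs]
      _ = _ := cfc_congr fun t ht => by rw [mul_right_comm, hss t ht]; ring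
  calc ‖a * star a - a * b * cfc r b * star a‖
      = ‖star (d * star a) * (d * star a)‖ := by
        rw [star_mul, star_star, hd.star_eq, mul_assoc a d, ← mul_assoc d, hdd]
        noncomm_ring
    _ = ‖d * (star a * a) * d‖ := by
        rw [CStarRing.norm_star_mul_self, ← CStarRing.norm_self_mul_star, star_mul, star_star,
          hd.star_eq, mul_assoc, mul_assoc, mul_assoc]
    _ ≤ ‖d * b * d‖ := by
        refine CStarAlgebra.norm_le_norm_of_nonneg_of_le ?_ ?_
        · simpa [hd.star_eq] using star_left_conjugate_nonneg (star_mul_self_nonneg a) d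
        · simpa [hd.star_eq] using star_left_conjugate_le_conjugate hab d
    _ ≤ ε := by
        rw [hdbd]
        refine norm_cfc_le hε.le fun t ht => ?_
        have ht0 := spectrum_nonneg_of_nonneg hb ht
        have := hpos t ht
        rw [Real.norm_of_nonneg (by positivity)]
        exact mul_le_of_le_one_right hε.le ((mul_inv_le_iff₀ this).2 (by linarith))

lemma TwoSidedIdeal.mul_star_mem_of_star_mul_le {A : Type*} [NonUnitalCStarAlgebra A]
    [PartialOrder A] [StarOrderedRing A] {L : TwoSidedIdeal A} (hL : IsClosed (L : Set A))
    {a b : A} (hb : b ∈ L) (hab : star a * a ≤ b) : a * star a ∈ L := by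
  have hab' : star (a : A⁺¹) * a ≤ b := by
    have hbsa : IsSelfAdjoint b := .of_nonneg ((star_mul_self_nonneg a).trans hab)
    rwa [← Unitization.inr_star, ← Unitization.inr_mul,
      Unitization.inr_le_iff _ _ (.star_mul_self a) hbsa]
  refine hL.closure_subset (Metric.mem_closure_iff.2 fun ε hε => ?_)
  obtain ⟨c, hc⟩ := CStarAlgebra.exists_norm_mul_star_sub_le hab' (half_pos hε)
  refine ⟨a * b * (c.fst • star a + c.snd * star a),
    L.mul_mem_right _ _ (L.mul_mem_left _ _ hb), ?_⟩
  have hcA : c * (star a : A) = ((c.fst • star a + c.snd * star a : A) : A⁺¹) := by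
    conv_lhs => rw [← Unitization.inl_fst_add_inr_snd_eq c]
    rw [add_mul, Unitization.inl_mul_inr, ← Unitization.inr_mul, Unitization.inr_add]
  rw [dist_eq_norm, ← Unitization.norm_inr (𝕜 := ℂ)]
  calc _ = ‖(a : A⁺¹) * star (a : A⁺¹) - a * b * c * star (a : A⁺¹)‖ := by
        rw [mul_assoc _ c, ← Unitization.inr_star, hcA]; push_cast; rfl
    _ < ε := hc.trans_lt (half_lt_self hε)

lemma norm_star_mul_self_sub_star_mul_self_le {A : Type*} [NonUnitalNormedRing A] [StarRing A]
    [NormedStarGroup A] (x y : A) :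
    ‖star x * x - star y * y‖ ≤ (‖x‖ + ‖y‖) * ‖x - y‖ := by
  calc ‖star x * x - star y * y‖ = ‖star x * (x - y) + star (x - y) * y‖ := by
        rw [star_sub]; noncomm_ring
    _ ≤ ‖x‖ * ‖x - y‖ + ‖x - y‖ * ‖y‖ := by
        refine (norm_add_le _ _).trans (add_le_add ?_ ?_) <;>
          refine (norm_mul_le _ _).trans_eq ?_ <;> rw [norm_star]
    _ = (‖x‖ + ‖y‖) * ‖x - y‖ := by ring

open ZeroAtInftyContinuousMap in
lemma exists_apply_ne_zero_of_norm_sub_lt {Q A : Type*} [TopologicalSpace Q]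
    [NonUnitalCStarAlgebra A] (ι : C₀(Q, ℂ) →⋆ₙₐ[ℂ] A) {L : TwoSidedIdeal A}
    (hL : IsClosed (L : Set A)) {h : C₀(Q, ℂ)} (hh : ‖h‖ ≤ 1) {l : A} (hl : l ∈ L)
    (hhl : ‖ι h - l‖ < 1 / 8) :
    ∃ k : C₀(Q, ℂ), ι k ∈ L ∧ ∀ x, ‖h x‖ = 1 → k x ≠ 0 := by
  let _ := CStarAlgebra.spectralOrder A
  have := CStarAlgebra.spectralOrderedRing A
  set φ : ℝ → ℝ := fun t => max (t ^ 2 - 1 / 2) 0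
  have hφ : Continuous φ := by fun_prop
  have hφ0 : φ 0 = 0 := by norm_num [φ]
  set g := compNorm φ hφ hφ0 h
  set s := compNorm (fun t => √(φ t)) (by fun_prop) (by simp [hφ0]) h
  have hss : star s * s = g := ext fun x => by
    simp only [s, g, mul_apply, star_apply, compNorm_apply, Complex.star_def, Complex.conj_ofReal]
    rw [← Complex.ofReal_mul, Real.mul_self_sqrt (le_max_right _ _)]
  have hgg : star g = g := ext fun x => by simp [g, Complex.conj_ofReal]
  have hφsq : ∀ t, φ t * t ^ 2 = φ t * φ t + 2⁻¹ * φ t := fun t => by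
    rcases le_total (t ^ 2) (1 / 2) with ht | ht
    · rw [show φ t = 0 from max_eq_right (sub_nonpos.2 ht)]; ring
    · rw [show φ t = t ^ 2 - 1 / 2 from max_eq_left (sub_nonneg.2 ht)]; ring
  have hgh : g * (star h * h) = g * g + (2⁻¹ : ℝ) • g := ext fun x => by
    simp only [g, mul_apply, ZeroAtInftyContinuousMap.add_apply,
      ZeroAtInftyContinuousMap.smul_apply, star_apply, compNorm_apply, Complex.star_def,
      Complex.conj_mul', Complex.real_smul]
    exact_mod_cast hφsq _
  refine ⟨g * g, ?_, fun x hx => by simp [g, φ, hx]; norm_num⟩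
  set z := star l * l
  have hbL : star (ι s) * z * ι s ∈ L :=
    L.mul_mem_right _ _ (L.mul_mem_left _ _ (L.mul_mem_left _ _ hl))
  have hz : ‖star (ι h) * ι h - z‖ ≤ 17 / 64 := by
    have h1 : ‖ι h‖ ≤ 1 := (NonUnitalStarAlgHom.norm_apply_le ι h).trans hh
    have h2 : ‖l‖ ≤ 9 / 8 := by
      have := norm_le_norm_add_norm_sub' l (ι h)
      rw [norm_sub_rev] at this
      linarith
    calc _ ≤ (‖ι h‖ + ‖l‖) * ‖ι h - l‖ := norm_star_mul_self_sub_star_mul_self_le _ _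
      _ ≤ (1 + 9 / 8) * (1 / 8) := by gcongr
      _ = 17 / 64 := by norm_num
  have hss' : star (ι s) * ι s = ι g := by rw [← map_star, ← map_mul, hss]
  have hshs : star (ι s) * (star (ι h) * ι h) * ι s = ι (g * g) + (2⁻¹ : ℝ) • ι g := by
    rw [← map_star, ← map_star, ← map_mul, ← map_mul, ← map_mul, mul_right_comm, hss, hgh,
      map_add, LinearMapClass.map_smul_of_tower]
  have hg0 : 0 ≤ ι g := hss' ▸ star_mul_self_nonneg (ι s)
  -- `s z s ≥ s (|h|² - 17/64) s = g² + (15/64) g ≥ g²`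
  have key : star (ι g) * ι g ≤ star (ι s) * z * ι s := by
    have hconj := CStarAlgebra.star_left_conjugate_le_norm_smul (a := ι s)
      (b := star (ι h) * ι h - z) ((IsSelfAdjoint.star_mul_self _).sub (.star_mul_self _))
    rw [mul_sub, sub_mul, hshs, hss'] at hconj
    have hsmul : ‖star (ι h) * ι h - z‖ • ι g ≤ (2⁻¹ : ℝ) • ι g :=
      smul_le_smul_of_nonneg_right (hz.trans (by norm_num)) hg0
    rw [← map_star, hgg, ← map_mul]
    calc ι (g * g) = ι (g * g) + (2⁻¹ : ℝ) • ι g - star (ι s) * z * ι s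
          + star (ι s) * z * ι s - (2⁻¹ : ℝ) • ι g := by abel
      _ ≤ (2⁻¹ : ℝ) • ι g + star (ι s) * z * ι s - (2⁻¹ : ℝ) • ι g := by
          gcongr; exact hconj.trans hsmul
      _ = star (ι s) * z * ι s := by abel
  simpa [← map_star, ← map_mul, hgg] using TwoSidedIdeal.mul_star_mem_of_star_mul_le hL hbL key

section VanishingIdeal

open ZeroAtInftyContinuousMap

variable {Q A : Type*} [TopologicalSpace Q] [NonUnitalCStarAlgebra A]
  (ι : C₀(Q, ℂ) →⋆ₙₐ[ℂ] A) (L : TwoSidedIdeal A) (q : Q)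

/-- `a + L` has `p^unif_q`-seminorm zero in `A ⧸ L`. -/
def VanishesAtModulo (a : A) : Prop :=
  ∀ ε > 0, ∃ g : C₀(Q, ℂ), g q = 1 ∧ ‖g‖ ≤ 1 ∧ ∃ l ∈ L, ‖ι g * a - l‖ < ε

variable {ι L q}

lemma norm_map_mul_le {g : C₀(Q, ℂ)} (hg : ‖g‖ ≤ 1) (a : A) : ‖ι g * a‖ ≤ ‖a‖ :=
  (norm_mul_le _ _).trans <| mul_le_of_le_one_left (norm_nonneg a)
    ((NonUnitalStarAlgHom.norm_apply_le ι g).trans hg)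

lemma vanishesAtModulo_of_mem [LocallyCompactSpace Q] [T2Space Q] {a : A} (ha : a ∈ L) :
    VanishesAtModulo ι L q a := fun ε hε => by
  obtain ⟨g, hgq, hg, -⟩ := exists_apply_eq_one_of_mem_isOpen isOpen_univ (Set.mem_univ q)
  exact ⟨g, hgq, hg, ι g * a, L.mul_mem_left _ _ ha, by simpa using hε⟩

lemma VanishesAtModulo.add {a b : A} (ha : VanishesAtModulo ι L q a)
    (hb : VanishesAtModulo ι L q b) : VanishesAtModulo ι L q (a + b) := fun ε hε => by
  obtain ⟨g₁, hg₁q, hg₁, l₁, hl₁, h₁⟩ := ha (ε / 2) (half_pos hε)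
  obtain ⟨g₂, hg₂q, hg₂, l₂, hl₂, h₂⟩ := hb (ε / 2) (half_pos hε)
  refine ⟨g₁ * g₂, by simp [hg₁q, hg₂q],
    (norm_mul_le _ _).trans (mul_le_one₀ hg₁ (norm_nonneg _) hg₂), ι g₂ * l₁ + ι g₁ * l₂,
    L.add_mem (L.mul_mem_left _ _ hl₁) (L.mul_mem_left _ _ hl₂), ?_⟩
  have hsplit : ι (g₁ * g₂) * (a + b) - (ι g₂ * l₁ + ι g₁ * l₂)
      = ι g₂ * (ι g₁ * a - l₁) + ι g₁ * (ι g₂ * b - l₂) := by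
    have hcomm : ι g₁ * ι g₂ = ι g₂ * ι g₁ := by rw [← map_mul, mul_comm, map_mul]
    rw [map_mul, mul_add]
    nth_rewrite 1 [hcomm]
    simp only [mul_sub, mul_assoc]
    abel
  calc _ ≤ ‖ι g₂ * (ι g₁ * a - l₁)‖ + ‖ι g₁ * (ι g₂ * b - l₂)‖ := hsplit ▸ norm_add_le _ _
    _ ≤ ‖ι g₁ * a - l₁‖ + ‖ι g₂ * b - l₂‖ :=
        add_le_add (norm_map_mul_le hg₂ _) (norm_map_mul_le hg₁ _)
    _ < ε / 2 + ε / 2 := add_lt_add h₁ h₂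
    _ = ε := add_halves ε

lemma VanishesAtModulo.neg {a : A} (ha : VanishesAtModulo ι L q a) :
    VanishesAtModulo ι L q (-a) := fun ε hε => by
  obtain ⟨g, hgq, hg, l, hl, h⟩ := ha ε hε
  exact ⟨g, hgq, hg, -l, L.neg_mem hl, by rwa [mul_neg, neg_sub_neg, norm_sub_rev]⟩

lemma VanishesAtModulo.mul_right {a : A} (ha : VanishesAtModulo ι L q a) (b : A) :
    VanishesAtModulo ι L q (a * b) := fun ε hε => by
  obtain ⟨g, hgq, hg, l, hl, h⟩ := ha (ε / (‖b‖ + 1)) (by positivity)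
  refine ⟨g, hgq, hg, l * b, L.mul_mem_right _ _ hl, ?_⟩
  calc ‖ι g * (a * b) - l * b‖ ≤ ‖ι g * a - l‖ * ‖b‖ := by
        rw [← mul_assoc, ← sub_mul]; exact norm_mul_le _ _
    _ ≤ ε / (‖b‖ + 1) * ‖b‖ := by gcongr
    _ < ε := by
        rw [div_mul_eq_mul_div, div_lt_iff₀ (by positivity)]
        nlinarith [norm_nonneg b]

lemma VanishesAtModulo.mul_left (hcentral : ∀ (f : C₀(Q, ℂ)) (a : A), ι f * a = a * ι f)
    {a : A} (ha : VanishesAtModulo ι L q a) (b : A) :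
    VanishesAtModulo ι L q (b * a) := fun ε hε => by
  obtain ⟨g, hgq, hg, l, hl, h⟩ := ha (ε / (‖b‖ + 1)) (by positivity)
  refine ⟨g, hgq, hg, b * l, L.mul_mem_left _ _ hl, ?_⟩
  calc ‖ι g * (b * a) - b * l‖ ≤ ‖b‖ * ‖ι g * a - l‖ := by
        rw [← mul_assoc, hcentral, mul_assoc, ← mul_sub]; exact norm_mul_le _ _
    _ ≤ ‖b‖ * (ε / (‖b‖ + 1)) := by gcongr
    _ < ε := by
        rw [mul_div_assoc', div_lt_iff₀ (by positivity)]
        nlinarith [norm_nonneg b]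

lemma isClosed_setOf_vanishesAtModulo : IsClosed {a : A | VanishesAtModulo ι L q a} := by
  refine isClosed_of_closure_subset fun a ha ε hε => ?_
  obtain ⟨b, hb, hab⟩ := Metric.mem_closure_iff.1 ha (ε / 2) (half_pos hε)
  obtain ⟨g, hgq, hg, l, hl, h⟩ := hb (ε / 2) (half_pos hε)
  refine ⟨g, hgq, hg, l, hl, ?_⟩
  calc ‖ι g * a - l‖ = ‖ι g * (a - b) + (ι g * b - l)‖ := by rw [mul_sub]; abel_nf
    _ ≤ ‖ι g * (a - b)‖ + ‖ι g * b - l‖ := norm_add_le _ _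
    _ < ε / 2 + ε / 2 := by
        refine add_lt_add_of_le_of_lt ((norm_map_mul_le hg _).trans ?_) h
        rw [← dist_eq_norm]; exact hab.le
    _ = ε := add_halves ε

lemma vanishesAtModulo_of_apply_eq_zero [LocallyCompactSpace Q] [T2Space Q] {f : C₀(Q, ℂ)}
    (hf : f q = 0) : VanishesAtModulo ι L q (ι f) := fun ε hε => by
  obtain ⟨g, hgq, hg, hgU⟩ := exists_apply_eq_one_of_mem_isOpen (U := {x | ‖f x‖ < ε / 2})
    (q := q) (isOpen_lt (map_continuous f).norm continuous_const) (by simpa [hf] using hε)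
  refine ⟨g, hgq, hg, 0, L.zero_mem, ?_⟩
  have hgf : ‖g * f‖ ≤ ε / 2 := by
    refine (norm_le _ (half_pos hε).le).2 fun x => ?_
    rw [mul_apply, norm_mul]
    by_cases hx : ‖f x‖ < ε / 2
    · exact (mul_le_of_le_one_left (norm_nonneg _) ((g.norm_apply_le x).trans hg)).trans hx.le
    · simpa [hgU x hx] using (half_pos hε).le
  calc ‖ι g * ι f - 0‖ ≤ ‖g * f‖ := by
        rw [sub_zero, ← map_mul]; exact NonUnitalStarAlgHom.norm_apply_le ι _
    _ < ε := hgf.trans_lt (half_lt_self hε)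

lemma apply_eq_zero_of_vanishesAtModulo_bot (hι : Isometry ι) {f : C₀(Q, ℂ)}
    (hf : VanishesAtModulo ι ⊥ q (ι f)) : f q = 0 := by
  by_contra hfq
  obtain ⟨g, hgq, -, l, hl, hgf⟩ := hf ‖f q‖ (norm_pos_iff.2 hfq)
  rw [(TwoSidedIdeal.mem_bot _).1 hl, sub_zero, ← map_mul,
    hι.norm_map_of_map_zero (map_zero ι)] at hgf
  have := (g * f).norm_apply_le q
  rw [mul_apply, hgq, one_mul] at this
  exact hgf.not_ge this

lemma not_vanishesAtModulo_of_apply_eq_one (hL : IsClosed (L : Set A))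
    (hker : ∀ f : C₀(Q, ℂ), ι f ∈ L → f q = 0) {f : C₀(Q, ℂ)} (hfq : f q = 1) (hf : ‖f‖ ≤ 1) :
    ¬ VanishesAtModulo ι L q (ι f) := fun hvan => by
  obtain ⟨g, hgq, hg, l, hl, hgf⟩ := hvan (1 / 8) (by norm_num)
  rw [← map_mul] at hgf
  obtain ⟨k, hkL, hk⟩ := exists_apply_ne_zero_of_norm_sub_lt ι hL
    ((norm_mul_le _ _).trans (mul_le_one₀ hg (norm_nonneg _) hf)) hl hgf
  exact hk q (by simp [hgq, hfq]) (hker k hkL)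

variable (ι L q) in
def vanishingIdeal [LocallyCompactSpace Q] [T2Space Q]
    (hcentral : ∀ (f : C₀(Q, ℂ)) (a : A), ι f * a = a * ι f) : TwoSidedIdeal A :=
  .mk' {a | VanishesAtModulo ι L q a} (vanishesAtModulo_of_mem L.zero_mem) .add .neg
    (.mul_left hcentral · _) (.mul_right · _)

variable [LocallyCompactSpace Q] [T2Space Q]
  {hcentral : ∀ (f : C₀(Q, ℂ)) (a : A), ι f * a = a * ι f}

@[simp]
lemma mem_vanishingIdeal {a : A} :
    a ∈ vanishingIdeal ι L q hcentral ↔ VanishesAtModulo ι L q a :=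
  TwoSidedIdeal.mem_mk' ..

lemma isClosed_vanishingIdeal : IsClosed (vanishingIdeal ι L q hcentral : Set A) := by
  simpa only [vanishingIdeal, TwoSidedIdeal.coe_mk'] using isClosed_setOf_vanishesAtModulo

end VanishingIdeal

lemma closedIdealGenBy_subset {A : Type*} [NonUnitalCStarAlgebra A] {S : Set A}
    {I : TwoSidedIdeal A} (hI : IsClosed (I : Set A)) (hS : S ⊆ I) :
    closedIdealGenBy S ⊆ I :=
  Set.sInter_subset_of_mem ⟨⟨I, rfl⟩, hI, hS⟩

section Junif

variable {Q A : Type*} [TopologicalSpace Q] [LocallyCompactSpace Q] [T2Space Q]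
  [NonUnitalCStarAlgebra A] {ι : C₀(Q, ℂ) →⋆ₙₐ[ℂ] A} {q : Q}

lemma Junif_subset_vanishingIdeal (hcentral : ∀ (f : C₀(Q, ℂ)) (a : A), ι f * a = a * ι f)
    (L : TwoSidedIdeal A) : Junif ι q ⊆ vanishingIdeal ι L q hcentral := by
  refine closedIdealGenBy_subset isClosed_vanishingIdeal ?_
  rintro _ ⟨f, hf, rfl⟩
  exact mem_vanishingIdeal.2 (vanishesAtModulo_of_apply_eq_zero hf)

lemma apply_eq_zero_of_mem_Junif (hι : Isometry ι)
    (hcentral : ∀ (f : C₀(Q, ℂ)) (a : A), ι f * a = a * ι f) {f : C₀(Q, ℂ)}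
    (hf : ι f ∈ Junif ι q) : f q = 0 :=
  apply_eq_zero_of_vanishesAtModulo_bot hι
    (mem_vanishingIdeal.1 (Junif_subset_vanishingIdeal hcentral ⊥ hf))

end Junif

theorem stmt6_general {Q : Type*} [TopologicalSpace Q] [LocallyCompactSpace Q] [T2Space Q]
    {A : Type*} [NonUnitalCStarAlgebra A]
    (ι : C₀(Q, ℂ) →⋆ₙₐ[ℂ] A) (hisom : Isometry ι)
    (hcentral : ∀ (f : C₀(Q, ℂ)) (a : A), ι f * a = a * ι f)
    (Q₀ : Set Q)
    (hQ₀ : Q₀ ⊆ {q : Q | QuotientSimpleBy (Junif ι q)}) :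
    ∀ L : TwoSidedIdeal A, IsClosed (L : Set A) → (L : Set A) ≠ Set.univ →
      Set.range ι ∩ (L : Set A) ⊆ Set.range ι ∩ ⋂ q ∈ Q₀, Junif ι q →
      (L : Set A) ⊆ ⋂ q ∈ Q₀, Junif ι q := by
  intro L hL _ hLQ₀ a ha
  refine Set.mem_iInter₂.2 fun q hq => ?_
  have hker : ∀ f : C₀(Q, ℂ), ι f ∈ L → f q = 0 := fun f hf =>
    apply_eq_zero_of_mem_Junif hisom hcentral (Set.mem_iInter₂.1 (hLQ₀ ⟨⟨f, rfl⟩, hf⟩).2 q hq)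
  rcases (hQ₀ hq).2 _ isClosed_vanishingIdeal (Junif_subset_vanishingIdeal hcentral L)
    with hM | hM
  · exact hM ▸ mem_vanishingIdeal.2 (vanishesAtModulo_of_mem ha)
  · obtain ⟨f, hfq, hf, -⟩ :=
      ZeroAtInftyContinuousMap.exists_apply_eq_one_of_mem_isOpen isOpen_univ (Set.mem_univ q)
    have hfM : ι f ∈ vanishingIdeal ι L q hcentral := by simp [← SetLike.mem_coe, hM]
    exact (not_vanishesAtModulo_of_apply_eq_one hL hker hfq hf
      (mem_vanishingIdeal.1 hfM)).elim

/-- For a central non-degenerate inclusion `C₀(Q) ⊆ A` with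
`Q^unif_simple = {q : A/J^unif_q simple}` non-empty, for every non-empty `Q₀ ⊆ Q^unif_simple`
the ideal `⋂_{q ∈ Q₀} J^unif_q` is dominant relative to `C₀(Q)`. -/
theorem stmt6 {Q : Type*} [TopologicalSpace Q] [LocallyCompactSpace Q] [T2Space Q]
    {A : Type*} [NonUnitalCStarAlgebra A]
    (ι : C₀(Q, ℂ) →⋆ₙₐ[ℂ] A) (hisom : Isometry ι)
    (hcentral : ∀ (f : C₀(Q, ℂ)) (a : A), ι f * a = a * ι f)
    (hnondeg : closure
      (Submodule.span ℂ {x : A | ∃ (f : C₀(Q, ℂ)) (a : A), x = ι f * a} : Set A) = Set.univ)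
    (hne : {q : Q | QuotientSimpleBy (Junif ι q)}.Nonempty)
    (Q₀ : Set Q) (hQ₀ne : Q₀.Nonempty)
    (hQ₀ : Q₀ ⊆ {q : Q | QuotientSimpleBy (Junif ι q)}) :
    ∀ L : TwoSidedIdeal A, IsClosed (L : Set A) → (L : Set A) ≠ Set.univ →
      Set.range ι ∩ (L : Set A) ⊆ Set.range ι ∩ ⋂ q ∈ Q₀, Junif ι q →
      (L : Set A) ⊆ ⋂ q ∈ Q₀, Junif ι q :=
  stmt6_general ι hisom hcentral Q₀ hQ₀
end

section
/- Let B ⊆ A be a non-degenerate C*-inclusion and let A^reg be the C*-subalgebra of A generated by N_A(B). Then every n ∈ N_{M(A)}(B) multiplies A^reg into itself, i.e. n x ∈ A^reg and x n ∈ A^reg for all x ∈ A^reg; consequently, under the canonical identification of M(A^reg) with {m ∈ M(A) : m A^reg ⊆ A^reg and A^reg m ⊆ A^reg}, one has N_{M(A^reg)}(B) = N_{M(A)}(B). -/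
open scoped MultiplierAlgebra

/-- The set of normalizers of `S`: `{n | n S n* ⊆ S and n* S n ⊆ S}`. -/
def normalizerIn {R : Type*} [Mul R] [Star R] (S : Set R) : Set R :=
  {n | ∀ s ∈ S, n * s * star n ∈ S ∧ star n * s * n ∈ S}

/-- The canonical embedding of `A` into its multiplier algebra `M(A) = 𝓜(ℂ, A)`. -/
noncomputable def kA (A : Type*) [NonUnitalCStarAlgebra A] : A →⋆ₙₐ[ℂ] 𝓜(ℂ, A) :=
  DoubleCentralizer.coeHom

/-- `N_{M(A)}(B)`: normalizers of `B` (viewed inside `M(A)`) in the multiplier algebra. -/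
def NM {A : Type*} [NonUnitalCStarAlgebra A] (Bs : Set A) : Set 𝓜(ℂ, A) :=
  normalizerIn (kA A '' Bs)

/-- `A^reg`: the C*-subalgebra of `A` generated by the normalizers `N_A(B)`. -/
def ARegSet {A : Type*} [NonUnitalCStarAlgebra A] (Bs : Set A) : Set A :=
  closure (NonUnitalStarAlgebra.adjoin ℂ (normalizerIn Bs) : Set A)

/-- Non-degeneracy of the inclusion `Bs ⊆ A`. -/
def NondegSet {A : Type*} [NonUnitalCStarAlgebra A] (Bs : Set A) : Prop :=
  closure (Submodule.span ℂ {x : A | ∃ b ∈ Bs, ∃ a : A, x = b * a} : Set A) = Set.univ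

section Aux

variable {A : Type*} [NonUnitalCStarAlgebra A]

lemma eq_zero_of_forall_mul_left {d : A} (h : ∀ c : A, c * d = 0) : d = 0 :=
  (CStarRing.star_mul_self_eq_zero_iff d).mp (h (star d))

lemma eq_zero_of_forall_mul_right {d : A} (h : ∀ c : A, d * c = 0) : d = 0 :=
  (CStarRing.mul_star_self_eq_zero_iff d).mp (h (star d))

lemma fst_mul' (n : 𝓜(ℂ, A)) (x y : A) : n.fst (x * y) = n.fst x * y := by
  rw [← sub_eq_zero]
  apply eq_zero_of_forall_mul_left
  intro c
  have h1 : c * n.fst (x * y) = n.snd c * (x * y) := (n.central c (x * y)).symm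
  have h2 : n.snd c * x = c * n.fst x := n.central c x
  rw [mul_sub, h1, ← mul_assoc, h2, mul_assoc, sub_self]

lemma snd_mul' (n : 𝓜(ℂ, A)) (x y : A) : n.snd (y * x) = y * n.snd x := by
  rw [← sub_eq_zero]
  apply eq_zero_of_forall_mul_right
  intro c
  have h1 : n.snd (y * x) * c = (y * x) * n.fst c := n.central (y * x) c
  have h2 : n.snd x * c = x * n.fst c := n.central x c
  rw [sub_mul, h1, mul_assoc y, ← h2, ← mul_assoc, sub_self]

lemma mul_coe_eq (n : 𝓜(ℂ, A)) (x : A) : n * kA A x = kA A (n.fst x) := by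
  refine DoubleCentralizer.ext ℂ A _ _ (Prod.ext ?_ ?_)
  · refine ContinuousLinearMap.ext fun y => ?_
    show n.fst (x * y) = n.fst x * y
    exact fst_mul' n x y
  · refine ContinuousLinearMap.ext fun y => ?_
    show (kA A x).snd (n.snd y) = y * n.fst x
    show n.snd y * x = y * n.fst x
    exact n.central y x

lemma coe_mul_eq (n : 𝓜(ℂ, A)) (x : A) : kA A x * n = kA A (n.snd x) := by
  refine DoubleCentralizer.ext ℂ A _ _ (Prod.ext ?_ ?_)
  · refine ContinuousLinearMap.ext fun y => ?_
    show x * n.fst y = n.snd x * y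
    exact (n.central x y).symm
  · refine ContinuousLinearMap.ext fun y => ?_
    show n.snd (y * x) = y * n.snd x
    exact snd_mul' n x y

lemma kA_injective : Function.Injective (kA A) := by
  intro a b h
  rw [← sub_eq_zero]
  apply eq_zero_of_forall_mul_right
  intro c
  have h0 : kA A (a - b) = 0 := by rw [map_sub, h, sub_self]
  calc (a - b) * c = (kA A (a - b)).fst c := rfl
    _ = (0 : 𝓜(ℂ, A)).fst c := by rw [h0]
    _ = 0 := rfl

lemma star_mem_NM {Bs : Set A} {n : 𝓜(ℂ, A)} (hn : n ∈ NM Bs) : star n ∈ NM Bs := by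
  intro s hs
  refine ⟨?_, ?_⟩
  · simpa [star_star] using (hn s hs).2
  · simpa [star_star] using (hn s hs).1

/-- Key lemma: for `n ∈ N_{M(A)}(B)` and `m ∈ N_A(B)`, `n.fst m ∈ N_A(B)`. -/
lemma fst_normalizer {Bs : Set A} (hB : ∀ x y z, x ∈ Bs → y ∈ Bs → z ∈ Bs → x * y * z ∈ Bs)
    {n : 𝓜(ℂ, A)} (hn : n ∈ NM Bs) {m : A} (hm : m ∈ normalizerIn Bs) :
    n.fst m ∈ normalizerIn Bs := by
  intro s hs
  constructor
  · obtain ⟨b, hb, hbe⟩ := (hn (kA A (m * s * star m))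
      ⟨m * s * star m, (hm s hs).1, rfl⟩).1
    have L : kA A (n.fst m * s * star (n.fst m))
        = n * (kA A m * (kA A s * (star (kA A m) * star n))) := by
      rw [map_mul, map_mul, map_star, ← mul_coe_eq, star_mul]
      simp only [mul_assoc]
    have R : kA A b = n * (kA A m * (kA A s * (star (kA A m) * star n))) := by
      rw [hbe, map_mul, map_mul, map_star]
      simp only [mul_assoc]
    rw [kA_injective (L.trans R.symm)]
    exact hb
  · obtain ⟨c, hc, hce⟩ := (hn (kA A s) ⟨s, hs, rfl⟩).2
    have L : kA A (star (n.fst m) * s * n.fst m)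
        = star (kA A m) * (star n * (kA A s * (n * kA A m))) := by
      rw [map_mul, map_mul, map_star, ← mul_coe_eq, star_mul]
      simp only [mul_assoc]
    have R : kA A (star m * c * m)
        = star (kA A m) * (star n * (kA A s * (n * kA A m))) := by
      rw [map_mul, map_mul, map_star, hce]
      simp only [mul_assoc]
    rw [kA_injective (L.trans R.symm)]
    exact (hm c hc).2

lemma snd_normalizer {Bs : Set A}
    {n : 𝓜(ℂ, A)} (hn : n ∈ NM Bs) {m : A} (hm : m ∈ normalizerIn Bs) :
    n.snd m ∈ normalizerIn Bs := by
  intro s hs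
  constructor
  · obtain ⟨c, hc, hce⟩ := (hn (kA A s) ⟨s, hs, rfl⟩).1
    have L : kA A (n.snd m * s * star (n.snd m))
        = kA A m * (n * (kA A s * (star n * star (kA A m)))) := by
      rw [map_mul, map_mul, map_star, ← coe_mul_eq, star_mul]
      simp only [mul_assoc]
    have R : kA A (m * c * star m)
        = kA A m * (n * (kA A s * (star n * star (kA A m)))) := by
      rw [map_mul, map_mul, map_star, hce]
      simp only [mul_assoc]
    rw [kA_injective (L.trans R.symm)]
    exact (hm c hc).1
  · obtain ⟨b, hb, hbe⟩ := (hn (kA A (star m * s * m))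
      ⟨star m * s * m, (hm s hs).2, rfl⟩).2
    have L : kA A (star (n.snd m) * s * n.snd m)
        = star n * (star (kA A m) * (kA A s * (kA A m * n))) := by
      rw [map_mul, map_mul, map_star, ← coe_mul_eq, star_mul]
      simp only [mul_assoc]
    have R : kA A b = star n * (star (kA A m) * (kA A s * (kA A m * n))) := by
      rw [hbe, map_mul, map_mul, map_star]
      simp only [mul_assoc]
    rw [kA_injective (L.trans R.symm)]
    exact hb

end Aux

/-- Every `n ∈ N_{M(A)}(B)` multiplies `A^reg` into itself; consequently,
under the identification of `M(A^reg)` with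
`{m ∈ M(A) : m A^reg ⊆ A^reg and A^reg m ⊆ A^reg}`, one has
`N_{M(A^reg)}(B) = N_{M(A)}(B)`. -/
theorem stmt15 {A : Type*} [NonUnitalCStarAlgebra A]
    (B : NonUnitalStarSubalgebra ℂ A) (hBclosed : IsClosed (B : Set A))
    (hnd : NondegSet (B : Set A)) :
    (∀ n ∈ NM (B : Set A), ∀ x ∈ ARegSet (B : Set A),
      n * kA A x ∈ kA A '' ARegSet (B : Set A) ∧
      kA A x * n ∈ kA A '' ARegSet (B : Set A)) ∧
    {m : 𝓜(ℂ, A) | ∀ x ∈ ARegSet (B : Set A),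
        m * kA A x ∈ kA A '' ARegSet (B : Set A) ∧
        kA A x * m ∈ kA A '' ARegSet (B : Set A)} ∩ NM (B : Set A) = NM (B : Set A) := by
  set Bs : Set A := (B : Set A) with hBs
  set S : NonUnitalStarSubalgebra ℂ A :=
    (NonUnitalStarAlgebra.adjoin ℂ (normalizerIn Bs)).topologicalClosure with hS
  have hScoe : ARegSet Bs = (S : Set A) := rfl
  have hSclosed : IsClosed (S : Set A) :=
    NonUnitalStarSubalgebra.isClosed_topologicalClosure _
  have hBmul : ∀ x y z : A, x ∈ Bs → y ∈ Bs → z ∈ Bs → x * y * z ∈ Bs :=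
    fun x y z hx hy hz => mul_mem (mul_mem hx hy) hz
  have hadj : (NonUnitalStarAlgebra.adjoin ℂ (normalizerIn Bs) : Set A) ⊆ (S : Set A) :=
    subset_closure
  -- main claim: for every n ∈ NM and x in the adjoin, n.fst x ∈ S and n.snd x ∈ S
  have main : ∀ x ∈ NonUnitalStarAlgebra.adjoin ℂ (normalizerIn Bs),
      ∀ n ∈ NM Bs, n.fst x ∈ S ∧ n.snd x ∈ S := by
    intro x hx
    induction hx using NonUnitalStarAlgebra.adjoin_induction with
    | mem m hm =>
      intro n hn
      exact ⟨hadj (NonUnitalStarAlgebra.subset_adjoin ℂ _ (fst_normalizer hBmul hn hm)),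
        hadj (NonUnitalStarAlgebra.subset_adjoin ℂ _ (snd_normalizer hn hm))⟩
    | add x y hx hy ihx ihy =>
      intro n hn
      exact ⟨by simpa using add_mem (ihx n hn).1 (ihy n hn).1,
        by simpa using add_mem (ihx n hn).2 (ihy n hn).2⟩
    | zero =>
      intro n hn
      simp only [map_zero]
      exact ⟨zero_mem S, zero_mem S⟩
    | mul x y hx hy ihx ihy =>
      intro n hn
      refine ⟨?_, ?_⟩
      · rw [fst_mul']
        exact mul_mem (ihx n hn).1 (hadj hy)
      · rw [snd_mul']
        exact mul_mem (hadj hx) (ihy n hn).2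
    | smul r x hx ihx =>
      intro n hn
      exact ⟨by simpa using SMulMemClass.smul_mem r (ihx n hn).1,
        by simpa using SMulMemClass.smul_mem r (ihx n hn).2⟩
    | star x hx ihx =>
      intro n hn
      have h1 : n.fst (star x) = star ((star n).snd x) := by
        apply kA_injective
        have := coe_mul_eq (star n) x
        rw [← mul_coe_eq, map_star]
        calc n * star (kA A x) = star (kA A x * star n) := by
              rw [star_mul, star_star]
            _ = star (kA A ((star n).snd x)) := by rw [coe_mul_eq]
            _ = kA A (star ((star n).snd x)) := by rw [← map_star]
      have h2 : n.snd (star x) = star ((star n).fst x) := by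
        apply kA_injective
        rw [← coe_mul_eq, map_star]
        calc star (kA A x) * n = star (star n * kA A x) := by
              rw [star_mul, star_star]
            _ = star (kA A ((star n).fst x)) := by rw [mul_coe_eq]
            _ = kA A (star ((star n).fst x)) := by rw [← map_star]
      have hsn := ihx (star n) (star_mem_NM hn)
      exact ⟨h1 ▸ star_mem hsn.2, h2 ▸ star_mem hsn.1⟩
  -- extend to the closure by continuity
  have mainc : ∀ n ∈ NM Bs, ∀ x ∈ ARegSet Bs, n.fst x ∈ S ∧ n.snd x ∈ S := by
    intro n hn x hx
    have hx' : x ∈ closure (NonUnitalStarAlgebra.adjoin ℂ (normalizerIn Bs) : Set A) := hx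
    constructor
    · have : n.fst x ∈ closure (S : Set A) := by
        refine map_mem_closure n.fst.continuous hx' ?_
        intro y hy
        exact (main y hy n hn).1
      rwa [hSclosed.closure_eq] at this
    · have : n.snd x ∈ closure (S : Set A) := by
        refine map_mem_closure n.snd.continuous hx' ?_
        intro y hy
        exact (main y hy n hn).2
      rwa [hSclosed.closure_eq] at this
  have part1 : ∀ n ∈ NM Bs, ∀ x ∈ ARegSet Bs,
      n * kA A x ∈ kA A '' ARegSet Bs ∧ kA A x * n ∈ kA A '' ARegSet Bs := by
    intro n hn x hx
    obtain ⟨h1, h2⟩ := mainc n hn x hx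
    exact ⟨⟨n.fst x, h1, (mul_coe_eq n x).symm⟩, ⟨n.snd x, h2, (coe_mul_eq n x).symm⟩⟩
  refine ⟨part1, ?_⟩
  apply Set.eq_of_subset_of_subset (Set.inter_subset_right)
  intro n hn
  exact ⟨fun x hx => part1 n hn x hx, hn⟩
end
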